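/- Let d ≥ 4 be an integer. For every (2,γ,δ) ∈ W_d that is not in the exceptional set E_ρ — where E₀ = {(2,2k'−1,0), (2,2k'−1,1), (2,2k',0)} if ρ = 0, E₁ = {(2,2k'−1,2), (2,2k',0), (2,2k',1)} if ρ = 1, and E₂ = {(2,2k',1), (2,2k',2), (2,2k'+1,0)} if ρ = 2 — there exist n ∈ {2,3} and elements a₂,…,a_n, b₁,…,b_n ∈ W_d such that (2,γ,δ) + a₂ + ⋯ + a_n = b₁ + ⋯ + b_n componentwise in ℤ³, each a_i is greater than or equal to (2,γ,δ) and each b_j is strictly greater than (2,γ,δ) in the lexicographic order on ℤ³, and the sets {(2,γ,δ), a₂, …, a_n} and {b₁, …, b_n} are disjoint. -/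

import Mathlib

/-!
All relations used live on the slice `r = 2`. If `w = (2,γ,δ)` is the first term of a
three-term arithmetic progression in `W_d` with lexicographically positive step, then
`w + (third term) = 2 · (middle term)` is a special 2-binomial. The step `(0,0,1)` works when
`2δ + 3γ ≤ 2d - 4` and the step `(0,1,-2)` when `δ ≥ 4`. The few points left over lie next to
the vertex `δ = 0, 3γ = 2d` of the slice; outside `E_ρ` they are handled by explicit relations
depending on `d mod 3`.
-/

/-- `W_d`: triples `(r,γ,δ)` encoding the degree-`d` monomials invariant under the
action of the diagonal matrix `M(1,e,e²,e³)`. -/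
def Wset (d : ℕ) : Set (ℤ × ℤ × ℤ) :=
  {x | 0 ≤ x.1 ∧ x.1 ≤ 3 ∧ 0 ≤ x.2.1 ∧ 0 ≤ x.2.2 ∧
    0 ≤ x.2.2 + 2 * x.2.1 + (1 - x.1) * (d : ℤ) ∧ 2 * x.2.2 + 3 * x.2.1 ≤ x.1 * (d : ℤ)}

/-- Strict lexicographic order on `ℤ³`. -/
def lexLt (x y : ℤ × ℤ × ℤ) : Prop :=
  x.1 < y.1 ∨ (x.1 = y.1 ∧ (x.2.1 < y.2.1 ∨ (x.2.1 = y.2.1 ∧ x.2.2 < y.2.2)))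

/-- Weak lexicographic order on `ℤ³`. -/
def lexLe (x y : ℤ × ℤ × ℤ) : Prop := lexLt x y ∨ x = y

/-- `w · a₂ ⋯ aₙ - b₁ ⋯ bₙ` is a special binomial in the variables indexed by `W_d`. -/
def HasSpecialBinomial (d : ℕ) (w : ℤ × ℤ × ℤ) : Prop :=
  ∃ n : ℕ, (n = 2 ∨ n = 3) ∧
    ∃ (a : Fin (n - 1) → ℤ × ℤ × ℤ) (b : Fin n → ℤ × ℤ × ℤ),
      (∀ i, a i ∈ Wset d) ∧ (∀ j, b j ∈ Wset d) ∧
      (w + ∑ i, a i = ∑ j, b j) ∧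
      (∀ i, lexLe w (a i)) ∧ (∀ j, lexLt w (b j)) ∧
      (({w} ∪ Set.range a) ∩ Set.range b = ∅)

theorem lexLt.ne {x y : ℤ × ℤ × ℤ} (h : lexLt x y) : x ≠ y := by
  rintro rfl
  rcases h with h | ⟨-, h | ⟨-, h⟩⟩ <;> exact lt_irrefl _ h

theorem mem_Wset_two_iff {d : ℕ} {γ δ : ℤ} :
    ((2 : ℤ), γ, δ) ∈ Wset d ↔ 0 ≤ γ ∧ 0 ≤ δ ∧ (d : ℤ) ≤ δ + 2 * γ ∧ 2 * δ + 3 * γ ≤ 2 * d := by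
  simp only [Wset, Set.mem_ofPred_eq]
  omega

theorem lexLt_two_iff {γ δ γ' δ' : ℤ} :
    lexLt ((2 : ℤ), γ, δ) (2, γ', δ') ↔ γ < γ' ∨ (γ = γ' ∧ δ < δ') := by
  simp [lexLt]

theorem lexLe_two_iff {γ δ γ' δ' : ℤ} :
    lexLe ((2 : ℤ), γ, δ) (2, γ', δ') ↔ γ < γ' ∨ (γ = γ' ∧ δ ≤ δ') := by
  simp only [lexLe, lexLt_two_iff, Prod.mk.injEq, true_and]
  omega

namespace HasSpecialBinomial

variable {d : ℕ} {w : ℤ × ℤ × ℤ}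

theorem of_two {a b₁ b₂ : ℤ × ℤ × ℤ} (ha : a ∈ Wset d) (hb₁ : b₁ ∈ Wset d) (hb₂ : b₂ ∈ Wset d)
    (hsum : w + a = b₁ + b₂) (hwa : lexLe w a) (hwb₁ : lexLt w b₁) (hwb₂ : lexLt w b₂)
    (hab₁ : b₁ ≠ a) (hab₂ : b₂ ≠ a) : HasSpecialBinomial d w := by
  refine ⟨2, Or.inl rfl, ![a], ![b₁, b₂], ?_, ?_, ?_, ?_, ?_, ?_⟩
  · simpa using ha
  · simpa [Fin.forall_fin_two] using ⟨hb₁, hb₂⟩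
  · simpa using hsum
  · simpa using hwa
  · simpa [Fin.forall_fin_two] using ⟨hwb₁, hwb₂⟩
  · have := hwb₁.ne
    have := hwb₂.ne
    simp only [Matrix.range_cons, Matrix.range_empty, Set.union_empty]
    aesop

theorem of_three {a₂ a₃ b : ℤ × ℤ × ℤ} (ha₂ : a₂ ∈ Wset d) (ha₃ : a₃ ∈ Wset d)
    (hb : b ∈ Wset d) (hsum : w + a₂ + a₃ = b + b + b) (hwa₂ : lexLe w a₂)
    (hwa₃ : lexLe w a₃) (hwb : lexLt w b) (hab₂ : b ≠ a₂) (hab₃ : b ≠ a₃) :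
    HasSpecialBinomial d w := by
  refine ⟨3, Or.inr rfl, ![a₂, a₃], ![b, b, b], ?_, ?_, ?_, ?_, ?_, ?_⟩
  · simpa [Fin.forall_fin_two] using ⟨ha₂, ha₃⟩
  · simpa [Fin.forall_fin_succ] using hb
  · simpa [Fin.sum_univ_three, add_assoc] using hsum
  · simpa [Fin.forall_fin_two] using ⟨hwa₂, hwa₃⟩
  · simpa [Fin.forall_fin_succ] using hwb
  · have := hwb.ne
    simp only [Matrix.range_cons, Matrix.range_empty, Set.union_empty]
    aesop

end HasSpecialBinomial

section Slice

variable {d k' : ℕ} {γ δ : ℤ}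

theorem hasSpecialBinomial_of_add_le (hw : ((2 : ℤ), γ, δ) ∈ Wset d)
    (h : 2 * δ + 3 * γ ≤ 2 * d - 4) : HasSpecialBinomial d (2, γ, δ) := by
  rw [mem_Wset_two_iff] at hw
  apply HasSpecialBinomial.of_two (a := (2, γ, δ + 2)) (b₁ := (2, γ, δ + 1))
    (b₂ := (2, γ, δ + 1)) <;>
    simp only [mem_Wset_two_iff, lexLt_two_iff, lexLe_two_iff, Prod.mk_add_mk, Prod.mk.injEq,
      ne_eq, true_and] <;> omega

theorem hasSpecialBinomial_of_four_le (hw : ((2 : ℤ), γ, δ) ∈ Wset d) (h : 4 ≤ δ) :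
    HasSpecialBinomial d (2, γ, δ) := by
  rw [mem_Wset_two_iff] at hw
  apply HasSpecialBinomial.of_two (a := (2, γ + 2, δ - 4)) (b₁ := (2, γ + 1, δ - 2))
    (b₂ := (2, γ + 1, δ - 2)) <;>
    simp only [mem_Wset_two_iff, lexLt_two_iff, lexLe_two_iff, Prod.mk_add_mk, Prod.mk.injEq,
      ne_eq, true_and] <;> omega

theorem hasSpecialBinomial_of_mod_three_eq_zero (hd : 4 ≤ d) (hk' : d = 3 * k')
    (hw : ((2 : ℤ), γ, δ) ∈ Wset d) (hnear : 2 * d - 4 < 2 * δ + 3 * γ) (hδ : δ < 4)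
    (hE : ¬((γ = 2 * (k' : ℤ) - 1 ∧ δ = 0) ∨ (γ = 2 * (k' : ℤ) - 1 ∧ δ = 1) ∨
      (γ = 2 * (k' : ℤ) ∧ δ = 0))) :
    HasSpecialBinomial d (2, γ, δ) := by
  rw [mem_Wset_two_iff] at hw
  obtain ⟨rfl, rfl⟩ | ⟨rfl, rfl⟩ | ⟨rfl, rfl⟩ : (γ = 2 * (k' : ℤ) - 2 ∧ δ = 2) ∨
      (γ = 2 * (k' : ℤ) - 3 ∧ δ = 3) ∨ (γ = 2 * (k' : ℤ) - 2 ∧ δ = 3) := by omega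
  · apply HasSpecialBinomial.of_two (a := (2, 2 * k' - 1, 1)) (b₁ := (2, 2 * k' - 2, 3))
      (b₂ := (2, 2 * k' - 1, 0)) <;>
      simp only [mem_Wset_two_iff, lexLt_two_iff, lexLe_two_iff, Prod.mk_add_mk, Prod.mk.injEq,
        ne_eq, true_and] <;> omega
  · apply HasSpecialBinomial.of_two (a := (2, 2 * k' - 1, 1)) (b₁ := (2, 2 * k' - 3, 4))
      (b₂ := (2, 2 * k' - 1, 0)) <;>
      simp only [mem_Wset_two_iff, lexLt_two_iff, lexLe_two_iff, Prod.mk_add_mk, Prod.mk.injEq,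
        ne_eq, true_and] <;> omega
  · apply HasSpecialBinomial.of_three (a₂ := (2, 2 * k' - 1, 0)) (a₃ := (2, 2 * k', 0))
      (b := (2, 2 * k' - 1, 1)) <;>
      simp only [mem_Wset_two_iff, lexLt_two_iff, lexLe_two_iff, Prod.mk_add_mk, Prod.mk.injEq,
        ne_eq, true_and] <;> omega

theorem hasSpecialBinomial_of_mod_three_eq_one (hk' : d = 3 * k' + 1)
    (hw : ((2 : ℤ), γ, δ) ∈ Wset d) (hnear : 2 * d - 4 < 2 * δ + 3 * γ) (hδ : δ < 4)
    (hE : ¬((γ = 2 * (k' : ℤ) - 1 ∧ δ = 2) ∨ (γ = 2 * (k' : ℤ) ∧ δ = 0) ∨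
      (γ = 2 * (k' : ℤ) ∧ δ = 1))) :
    HasSpecialBinomial d (2, γ, δ) := by
  rw [mem_Wset_two_iff] at hw
  obtain ⟨rfl, rfl⟩ | ⟨rfl, rfl⟩ :
      (γ = 2 * (k' : ℤ) - 1 ∧ δ = 1) ∨ (γ = 2 * (k' : ℤ) - 2 ∧ δ = 3) := by omega
  · apply HasSpecialBinomial.of_two (a := (2, 2 * k', 1)) (b₁ := (2, 2 * k' - 1, 2))
      (b₂ := (2, 2 * k', 0)) <;>
      simp only [mem_Wset_two_iff, lexLt_two_iff, lexLe_two_iff, Prod.mk_add_mk, Prod.mk.injEq,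
        ne_eq, true_and] <;> omega
  · apply HasSpecialBinomial.of_two (a := (2, 2 * k', 1)) (b₁ := (2, 2 * k' - 2, 4))
      (b₂ := (2, 2 * k', 0)) <;>
      simp only [mem_Wset_two_iff, lexLt_two_iff, lexLe_two_iff, Prod.mk_add_mk, Prod.mk.injEq,
        ne_eq, true_and] <;> omega

theorem hasSpecialBinomial_of_mod_three_eq_two (hk' : d = 3 * k' + 2)
    (hw : ((2 : ℤ), γ, δ) ∈ Wset d) (hnear : 2 * d - 4 < 2 * δ + 3 * γ) (hδ : δ < 4)
    (hE : ¬((γ = 2 * (k' : ℤ) ∧ δ = 1) ∨ (γ = 2 * (k' : ℤ) ∧ δ = 2) ∨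
      (γ = 2 * (k' : ℤ) + 1 ∧ δ = 0))) :
    HasSpecialBinomial d (2, γ, δ) := by
  rw [mem_Wset_two_iff] at hw
  obtain ⟨rfl, rfl⟩ | ⟨rfl, rfl⟩ :
      (γ = 2 * (k' : ℤ) - 1 ∧ δ = 2) ∨ (γ = 2 * (k' : ℤ) - 1 ∧ δ = 3) := by omega
  · apply HasSpecialBinomial.of_two (a := (2, 2 * k', 1)) (b₁ := (2, 2 * k' - 1, 3))
      (b₂ := (2, 2 * k', 0)) <;>
      simp only [mem_Wset_two_iff, lexLt_two_iff, lexLe_two_iff, Prod.mk_add_mk, Prod.mk.injEq,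
        ne_eq, true_and] <;> omega
  · apply HasSpecialBinomial.of_two (a := (2, 2 * k' + 1, 0)) (b₁ := (2, 2 * k', 1))
      (b₂ := (2, 2 * k', 2)) <;>
      simp only [mem_Wset_two_iff, lexLt_two_iff, lexLe_two_iff, Prod.mk_add_mk, Prod.mk.injEq,
        ne_eq, true_and] <;> omega

end Slice

theorem stmt12 (d k' ρ : ℕ) (hd : 4 ≤ d)
    (hkρ : d = 3 * k' + ρ) (hρ : ρ ≤ 2)
    (γ δ : ℤ) (hmem : ((2:ℤ), γ, δ) ∈ Wset d)
    (hexc0 : ¬ (ρ = 0 ∧ ((γ = 2 * (k':ℤ) - 1 ∧ δ = 0) ∨ (γ = 2 * (k':ℤ) - 1 ∧ δ = 1) ∨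
        (γ = 2 * (k':ℤ) ∧ δ = 0))))
    (hexc1 : ¬ (ρ = 1 ∧ ((γ = 2 * (k':ℤ) - 1 ∧ δ = 2) ∨ (γ = 2 * (k':ℤ) ∧ δ = 0) ∨
        (γ = 2 * (k':ℤ) ∧ δ = 1))))
    (hexc2 : ¬ (ρ = 2 ∧ ((γ = 2 * (k':ℤ) ∧ δ = 1) ∨ (γ = 2 * (k':ℤ) ∧ δ = 2) ∨
        (γ = 2 * (k':ℤ) + 1 ∧ δ = 0)))) :
    ∃ n : ℕ, (n = 2 ∨ n = 3) ∧
      ∃ (a : Fin (n - 1) → ℤ × ℤ × ℤ) (b : Fin n → ℤ × ℤ × ℤ),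
        (∀ i, a i ∈ Wset d) ∧ (∀ j, b j ∈ Wset d) ∧
        (((2:ℤ), γ, δ) + ∑ i, a i = ∑ j, b j) ∧
        (∀ i, lexLe ((2:ℤ), γ, δ) (a i)) ∧
        (∀ j, lexLt ((2:ℤ), γ, δ) (b j)) ∧
        ((({((2:ℤ), γ, δ)} : Set (ℤ × ℤ × ℤ)) ∪ Set.range a) ∩ Set.range b = ∅) := by
  change HasSpecialBinomial d (2, γ, δ)
  by_cases hfar : 2 * δ + 3 * γ ≤ 2 * d - 4
  · exact hasSpecialBinomial_of_add_le hmem hfar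
  by_cases hδ : 4 ≤ δ
  · exact hasSpecialBinomial_of_four_le hmem hδ
  push Not at hfar hδ
  interval_cases ρ
  · exact hasSpecialBinomial_of_mod_three_eq_zero hd hkρ hmem hfar hδ (hexc0 ⟨rfl, ·⟩)
  · exact hasSpecialBinomial_of_mod_three_eq_one hkρ hmem hfar hδ (hexc1 ⟨rfl, ·⟩)
  · exact hasSpecialBinomial_of_mod_three_eq_two hkρ hmem hfar hδ (hexc2 ⟨rfl, ·⟩)
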